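/- Let (Ω, 𝔉, P) be a probability space, 𝒢 ⊆ 𝔉 a sub-σ-algebra, β ∈ (0,1), c₄ > 0, c₅ ≥ 0. Let D be an integrable real random variable, let Δ ≥ 0 and K ≥ 0 be 𝒢-measurable random variables, and let I, J be events. Assume: (i) D·1(J) ≤ −c₄·Δ²·1(J) almost surely; (ii) D·1(I ∩ Jᶜ) ≤ c₅·Δ²·1(I ∩ Jᶜ) almost surely; (iii) E[D·1(Iᶜ ∩ Jᶜ) | 𝒢] ≤ K·Δ² almost surely; (iv) E[1(J) | 𝒢] ≥ β almost surely. Then almost surely E[D | 𝒢] ≤ (−β·c₄ + (1 − β)·c₅ + K)·Δ². -/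

import Mathlib

open MeasureTheory

lemma auxA {Ω : Type*} {𝒢 : MeasurableSpace Ω} [𝔉 : MeasurableSpace Ω]
    (P : Measure Ω) [IsProbabilityMeasure P] (h𝒢 : 𝒢 ≤ 𝔉)
    (m : Ω → ℝ) (hm : Measurable[𝒢] m)
    (A : Set Ω) (hA : MeasurableSet A)
    (f : Ω → ℝ) (hf : Integrable f P)
    (hfm : ∀ᵐ ω ∂P, f ω ≤ m ω * A.indicator (fun _ => (1 : ℝ)) ω) :
    ∀ᵐ ω ∂P, (P[f|𝒢]) ω ≤ m ω * (P[A.indicator (fun _ => (1 : ℝ))|𝒢]) ω := by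
  set χ : Ω → ℝ := A.indicator (fun _ => (1 : ℝ)) with hχdef
  have hχ_int : Integrable χ P := (integrable_const (1 : ℝ)).indicator hA
  have hχ_meas : Measurable χ := measurable_const.indicator hA
  set S : ℕ → Set Ω := fun n => m ⁻¹' Set.Icc (-(n : ℝ)) (n : ℝ) with hSdef
  have hSm : ∀ n, MeasurableSet[𝒢] (S n) := fun n => hm measurableSet_Icc
  have key : ∀ n : ℕ, ∀ᵐ ω ∂P, ω ∈ S n → (P[f|𝒢]) ω ≤ m ω * (P[χ|𝒢]) ω := by
    intro n
    set mₙ : Ω → ℝ := (S n).indicator m with hmₙdef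
    have hmₙ_sm : StronglyMeasurable[𝒢] mₙ := (hm.indicator (hSm n)).stronglyMeasurable
    have hbound : ∀ᵐ ω ∂P, ‖mₙ ω‖ ≤ (n : ℝ) := by
      refine Filter.Eventually.of_forall fun ω => ?_
      by_cases h : ω ∈ S n
      · rw [hmₙdef, Set.indicator_of_mem h]
        exact abs_le.2 ⟨h.1, h.2⟩
      · simp [hmₙdef, Set.indicator_of_notMem h]
    have hpull : P[mₙ * χ|𝒢] =ᵐ[P] mₙ * P[χ|𝒢] :=
      condExp_stronglyMeasurable_mul_of_bound h𝒢 hmₙ_sm hχ_int n hbound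
    have hle : (S n).indicator f ≤ᵐ[P] mₙ * χ := by
      filter_upwards [hfm] with ω hω
      by_cases h : ω ∈ S n
      · simpa [Set.indicator_of_mem h, hmₙdef] using hω
      · simp [Set.indicator_of_notMem h, hmₙdef]
    have hint1 : Integrable ((S n).indicator f) P := hf.indicator (h𝒢 _ (hSm n))
    have hint2 : Integrable (mₙ * χ) P := by
      refine Integrable.mono' (integrable_const (n : ℝ)) ?_ ?_
      · exact ((hmₙ_sm.mono h𝒢).aestronglyMeasurable.mul hχ_meas.aestronglyMeasurable)
      · filter_upwards [hbound] with ω hω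
        have hχb : ‖χ ω‖ ≤ 1 := by
          by_cases h : ω ∈ A <;> simp [hχdef, Set.indicator_of_mem, Set.indicator_of_notMem, h]
        calc ‖(mₙ * χ) ω‖ = ‖mₙ ω‖ * ‖χ ω‖ := norm_mul _ _
          _ ≤ (n : ℝ) * 1 := mul_le_mul hω hχb (norm_nonneg _) (Nat.cast_nonneg n)
          _ = (n : ℝ) := mul_one _
    have hmono := condExp_mono (m := 𝒢) hint1 hint2 hle
    have hind : P[(S n).indicator f|𝒢] =ᵐ[P] (S n).indicator (P[f|𝒢]) :=
      condExp_indicator hf (hSm n)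
    filter_upwards [hmono, hind, hpull] with ω h1 h2 h3 hωS
    have e1 : (P[f|𝒢]) ω = ((S n).indicator (P[f|𝒢])) ω := by
      rw [Set.indicator_of_mem hωS]
    rw [e1, ← h2]
    calc (P[(S n).indicator f|𝒢]) ω ≤ (P[mₙ * χ|𝒢]) ω := h1
      _ = mₙ ω * (P[χ|𝒢]) ω := h3
      _ = m ω * (P[χ|𝒢]) ω := by rw [hmₙdef, Set.indicator_of_mem hωS]
  have hcover : ∀ ω, ∃ n : ℕ, ω ∈ S n := fun ω => by
    obtain ⟨n, hn⟩ := exists_nat_ge |m ω|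
    exact ⟨n, (abs_le.1 hn).1, (abs_le.1 hn).2⟩
  filter_upwards [ae_all_iff.2 key] with ω hω
  obtain ⟨n, hn⟩ := hcover ω
  exact hω n hn

theorem stmt_16 {Ω : Type*} (𝒢 : MeasurableSpace Ω) {𝔉 : MeasurableSpace Ω} (P : Measure Ω)
    [IsProbabilityMeasure P]
    (h𝒢 : 𝒢 ≤ 𝔉)
    (β c₄ c₅ : ℝ) (hβ : β ∈ Set.Ioo (0 : ℝ) 1) (hc₄ : 0 < c₄) (hc₅ : 0 ≤ c₅)
    (D : Ω → ℝ) (hD : Integrable D P)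
    (Δ K : Ω → ℝ) (hΔm : Measurable[𝒢] Δ) (hKm : Measurable[𝒢] K)
    (hΔ0 : ∀ ω, 0 ≤ Δ ω) (hK0 : ∀ ω, 0 ≤ K ω)
    (I J : Set Ω) (hIm : MeasurableSet I) (hJm : MeasurableSet J)
    (hi : ∀ᵐ ω ∂P, D ω * Set.indicator J (fun _ => (1 : ℝ)) ω ≤
      -c₄ * Δ ω ^ 2 * Set.indicator J (fun _ => (1 : ℝ)) ω)
    (hii : ∀ᵐ ω ∂P, D ω * Set.indicator (I ∩ Jᶜ) (fun _ => (1 : ℝ)) ω ≤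
      c₅ * Δ ω ^ 2 * Set.indicator (I ∩ Jᶜ) (fun _ => (1 : ℝ)) ω)
    (hiii : ∀ᵐ ω ∂P, (P[Set.indicator (Iᶜ ∩ Jᶜ) D|𝒢]) ω ≤ K ω * Δ ω ^ 2)
    (hiv : ∀ᵐ ω ∂P, β ≤ (P[Set.indicator J (fun _ => (1 : ℝ))|𝒢]) ω) :
    ∀ᵐ ω ∂P, (P[D|𝒢]) ω ≤ (-β * c₄ + (1 - β) * c₅ + K ω) * Δ ω ^ 2 := by
  obtain ⟨hβ0, hβ1⟩ := hβ
  letI : MeasurableSpace Ω := 𝔉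
  have hJm' : MeasurableSet J := hJm
  have hAm : MeasurableSet (I ∩ Jᶜ) := hIm.inter hJm.compl
  have hBm : MeasurableSet (Iᶜ ∩ Jᶜ) := hIm.compl.inter hJm.compl
  set χJ : Ω → ℝ := J.indicator (fun _ => (1 : ℝ)) with hχJ
  set χA : Ω → ℝ := (I ∩ Jᶜ).indicator (fun _ => (1 : ℝ)) with hχA
  have hint1 : Integrable (J.indicator D) P := hD.indicator hJm'
  have hint2 : Integrable ((I ∩ Jᶜ).indicator D) P := hD.indicator hAm
  have hint3 : Integrable ((Iᶜ ∩ Jᶜ).indicator D) P := hD.indicator hBm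
  have hχJ_int : Integrable χJ P := (integrable_const (1 : ℝ)).indicator hJm'
  have hχA_int : Integrable χA P := (integrable_const (1 : ℝ)).indicator hAm
  -- decomposition of D
  have hsplit : D = J.indicator D + (I ∩ Jᶜ).indicator D + (Iᶜ ∩ Jᶜ).indicator D := by
    funext ω
    by_cases hJω : ω ∈ J <;> by_cases hIω : ω ∈ I <;>
      simp [Set.indicator_apply, hJω, hIω]
  have hadd : P[D|𝒢] =ᵐ[P]
      P[J.indicator D|𝒢] + P[(I ∩ Jᶜ).indicator D|𝒢] + P[(Iᶜ ∩ Jᶜ).indicator D|𝒢] := by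
    conv_lhs => rw [hsplit]
    exact (condExp_add (hint1.add hint2) hint3 𝒢).trans
      ((condExp_add hint1 hint2 𝒢).add Filter.EventuallyEq.rfl)
  -- bound 1
  have hb1 : ∀ᵐ ω ∂P, (P[J.indicator D|𝒢]) ω ≤ (-c₄ * Δ ω ^ 2) * (P[χJ|𝒢]) ω := by
    refine auxA P h𝒢 (fun ω => -c₄ * Δ ω ^ 2) ((hΔm.pow_const 2).const_mul (-c₄)) J hJm' _
      hint1 ?_
    filter_upwards [hi] with ω hω
    have : J.indicator D ω = D ω * χJ ω := by
      by_cases h : ω ∈ J <;> simp [hχJ, Set.indicator_apply, h]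
    rw [this]
    exact hω
  -- bound 2
  have hb2 : ∀ᵐ ω ∂P, (P[(I ∩ Jᶜ).indicator D|𝒢]) ω ≤ (c₅ * Δ ω ^ 2) * (P[χA|𝒢]) ω := by
    refine auxA P h𝒢 (fun ω => c₅ * Δ ω ^ 2) ((hΔm.pow_const 2).const_mul c₅) (I ∩ Jᶜ) hAm _
      hint2 ?_
    filter_upwards [hii] with ω hω
    have : (I ∩ Jᶜ).indicator D ω = D ω * χA ω := by
      by_cases h : ω ∈ I ∩ Jᶜ <;> simp [hχA, Set.indicator_apply, h]
    rw [this]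
    exact hω
  -- E[χA|𝒢] ≤ 1 - E[χJ|𝒢]
  have hχA_le : ∀ᵐ ω ∂P, (P[χA|𝒢]) ω ≤ 1 - (P[χJ|𝒢]) ω := by
    have hptw : χA ≤ᵐ[P] (fun _ => (1 : ℝ)) - χJ := by
      refine Filter.Eventually.of_forall fun ω => ?_
      by_cases hJω : ω ∈ J <;> by_cases hIω : ω ∈ I <;>
        simp [hχA, hχJ, Set.indicator_apply, hJω, hIω]
    have hmono := condExp_mono (m := 𝒢) hχA_int ((integrable_const (1 : ℝ)).sub hχJ_int) hptw
    have hsub := condExp_sub (μ := P) (m := 𝒢) (integrable_const (1 : ℝ)) hχJ_int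
    have hconst : P[(fun _ => (1 : ℝ))|𝒢] = fun _ => (1 : ℝ) := condExp_const h𝒢 (1 : ℝ)
    filter_upwards [hmono, hsub] with ω h1 h2
    calc (P[χA|𝒢]) ω ≤ (P[(fun _ => (1 : ℝ)) - χJ|𝒢]) ω := h1
      _ = (P[(fun _ => (1 : ℝ))|𝒢]) ω - (P[χJ|𝒢]) ω := h2
      _ = 1 - (P[χJ|𝒢]) ω := by rw [hconst]
  filter_upwards [hadd, hb1, hb2, hiii, hiv, hχA_le] with ω hA hB1 hB2 hB3 hIV hAle
  have hsq : (0 : ℝ) ≤ Δ ω ^ 2 := sq_nonneg _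
  have h1 : (-c₄ * Δ ω ^ 2) * (P[χJ|𝒢]) ω ≤ -β * c₄ * Δ ω ^ 2 := by
    nlinarith [mul_nonneg (mul_nonneg hc₄.le hsq) (sub_nonneg.2 hIV)]
  have h2 : (c₅ * Δ ω ^ 2) * (P[χA|𝒢]) ω ≤ (1 - β) * c₅ * Δ ω ^ 2 := by
    have : (P[χA|𝒢]) ω ≤ 1 - β := by linarith
    nlinarith [mul_nonneg (mul_nonneg hc₅ hsq) (sub_nonneg.2 this)]
  calc (P[D|𝒢]) ω
      = (P[J.indicator D|𝒢]) ω + (P[(I ∩ Jᶜ).indicator D|𝒢]) ω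
        + (P[(Iᶜ ∩ Jᶜ).indicator D|𝒢]) ω := hA
    _ ≤ (-c₄ * Δ ω ^ 2) * (P[χJ|𝒢]) ω + (c₅ * Δ ω ^ 2) * (P[χA|𝒢]) ω + K ω * Δ ω ^ 2 := by
        exact add_le_add (add_le_add hB1 hB2) hB3
    _ ≤ -β * c₄ * Δ ω ^ 2 + (1 - β) * c₅ * Δ ω ^ 2 + K ω * Δ ω ^ 2 := by
        exact add_le_add (add_le_add h1 h2) le_rfl
    _ = (-β * c₄ + (1 - β) * c₅ + K ω) * Δ ω ^ 2 := by ring
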